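/- arXiv:2205.14092 — 3 statements merged into one kernel-verified Lean document; each statement's English description precedes it below -/
import Mathlib

section
/- Let (B_k) be the simple random walk on a finite graph with the starting node chosen uniformly at random among n nodes, and P̃ the tensor transition matrix over an associative unital ℝ-algebra H. Then (1/n)·𝟙_Hᵀ P̃^k, as a row vector in H^n, has i-th component equal to P(B_k = i)·E[φ(δ_1 L)⋯φ(δ_k L) | B_k = i], where δ_q L = f(B_q) − f(B_{q-1}). -/
/-!
Expanding the `k`-th power of a matrix entrywise writes `(v ᵥ* M ^ k) i` as a sum over all
length-`k` paths ending at `i` of the ordered product of the entries along the path. The entries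
of `P̃` are those of the real transition matrix `P` scaling the lifted increments `φ (f j - f i)`;
real scalars commute with everything in `H`, so along each path they collect into the path
probability `∏ P`, leaving the ordered `H`-product of the increments.
-/

open Matrix

def degree (n : ℕ) (Adj : Fin n → Fin n → Prop) [DecidableRel Adj] (i : Fin n) : ℕ :=
  (Finset.univ.filter (fun j => Adj i j)).card

theorem prod_ofFn_smul {R A : Type*} [CommMonoid R] [Monoid A] [MulAction R A]
    [IsScalarTower R A A] [SMulCommClass R A A] {k : ℕ} (c : Fin k → R) (x : Fin k → A) :
    (List.ofFn fun q => c q • x q).prod = (∏ q, c q) • (List.ofFn x).prod := by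
  induction k with
  | zero => simp
  | succ k ih =>
    rw [List.ofFn_succ, List.prod_cons, ih, Fin.prod_univ_succ, List.ofFn_succ, List.prod_cons,
      smul_mul_smul_comm]

theorem vecMul_pow_apply_eq_sum_paths {ι H : Type*} [Fintype ι] [DecidableEq ι] [Semiring H]
    (M : Matrix ι ι H) (v : ι → H) (k : ℕ) (i : ι) :
    (v ᵥ* M ^ k) i = ∑ w : Fin (k + 1) → ι,
      if w (Fin.last k) = i then
        v (w 0) * (List.ofFn fun q : Fin k => M (w q.castSucc) (w q.succ)).prod
      else 0 := by
  induction k generalizing i with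
  | zero =>
    rw [pow_zero, vecMul_one, ← (Equiv.funUnique (Fin 1) ι).symm.sum_comp]
    simp [Fin.last]
  | succ k ih =>
    rw [pow_succ, ← vecMul_vecMul, vecMul, dotProduct,
      ← (Fin.snocEquiv fun _ => ι).sum_comp, Fintype.sum_prod_type]
    simp only [ih, Finset.sum_mul, Fin.snocEquiv, Equiv.coe_fn_mk, Fin.snoc_last]
    rw [Finset.sum_comm, Finset.sum_comm (γ := ι)]
    refine Fintype.sum_congr _ _ fun w => ?_
    simp only [ite_mul, zero_mul, Finset.sum_ite_eq, Finset.sum_ite_eq', Finset.mem_univ, if_true]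
    rw [List.ofFn_succ', List.prod_concat, ← mul_assoc, ← Fin.castSucc_zero (n := k + 1)]
    simp only [Fin.snoc_castSucc, Fin.succ_castSucc, Fin.succ_last, Fin.snoc_last]

theorem forward_hypoelliptic_diffusion_general (n d k : ℕ)
    (H : Type*) [Ring H] [Algebra ℝ H]
    (Adj : Fin n → Fin n → Prop) [DecidableRel Adj]
    (f : Fin n → Fin d → ℝ) (φ : (Fin d → ℝ) → H)
    (Pt : Matrix (Fin n) (Fin n) H)
    (hPt : ∀ i j, Pt i j =
      if Adj i j then ((degree n Adj i : ℝ))⁻¹ • φ (f j - f i) else 0)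
    (P : Matrix (Fin n) (Fin n) ℝ)
    (hP : ∀ i j, P i j = if Adj i j then ((degree n Adj i : ℝ))⁻¹ else 0)
    (i : Fin n) :
    ((n : ℝ))⁻¹ • Matrix.vecMul (fun _ => (1 : H)) (Pt ^ k) i =
      ∑ w : Fin (k+1) → Fin n,
        (if w (Fin.last k) = i then
          ((n : ℝ))⁻¹ * ∏ q : Fin k, P (w q.castSucc) (w q.succ) else 0) •
          (List.ofFn fun q : Fin k =>
            φ (f (w q.succ) - f (w q.castSucc))).prod := by
  have hPt_eq_smul : ∀ a b, Pt a b = P a b • φ (f b - f a) := fun a b => by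
    rw [hPt, hP]
    split_ifs <;> simp
  rw [vecMul_pow_apply_eq_sum_paths, Finset.smul_sum]
  refine Fintype.sum_congr _ _ fun w => ?_
  simp only [hPt_eq_smul, prod_ofFn_smul, one_mul, ite_smul, zero_smul, smul_ite, smul_zero,
    mul_smul]

/-- Forward hypo-elliptic diffusion: for the simple random walk started uniformly at
random among the `n` nodes, the `i`-th component of the row vector `(1/n)·𝟙_Hᵀ P̃^k`
equals `P(B_k = i)·E[φ(δ₁L)⋯φ(δ_kL) | B_k = i]`, i.e. the sum over all length-`k`
trajectories ending at `i` of their joint probability (including the uniform `1/n`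
initial factor) times the ordered `H`-product of the lifted increments. -/
theorem forward_hypoelliptic_diffusion (n d k : ℕ) (hn : 0 < n) (hk : 1 ≤ k)
    (H : Type*) [Ring H] [Algebra ℝ H]
    (Adj : Fin n → Fin n → Prop) [DecidableRel Adj] (hsymm : Symmetric Adj)
    (hdeg : ∀ i, 0 < degree n Adj i)
    (f : Fin n → Fin d → ℝ) (φ : (Fin d → ℝ) → H)
    (Pt : Matrix (Fin n) (Fin n) H)
    (hPt : ∀ i j, Pt i j =
      if Adj i j then ((degree n Adj i : ℝ))⁻¹ • φ (f j - f i) else 0)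
    (P : Matrix (Fin n) (Fin n) ℝ)
    (hP : ∀ i j, P i j = if Adj i j then ((degree n Adj i : ℝ))⁻¹ else 0)
    (i : Fin n) :
    ((n : ℝ))⁻¹ • Matrix.vecMul (fun _ => (1 : H)) (Pt ^ k) i =
      ∑ w : Fin (k+1) → Fin n,
        (if w (Fin.last k) = i then
          ((n : ℝ))⁻¹ * ∏ q : Fin k, P (w q.castSucc) (w q.succ) else 0) •
          (List.ofFn fun q : Fin k =>
            φ (f (w q.succ) - f (w q.castSucc))).prod :=
  forward_hypoelliptic_diffusion_general n d k H Adj f φ Pt hPt P hP i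
end

section
/- Fix M ≥ 1, vectors u_1,…,u_M ∈ ℝ^d, and set ℓ_m = u_{M-m+1} ⊗ ⋯ ⊗ u_M ∈ (ℝ^d)^{⊗m} for 1 ≤ m ≤ M and ℓ_0 = 1. Let Φ̂_k(i) = E[exp_⊗(δ_1 L)⋯exp_⊗(δ_k L) | B_0 = i] ∈ H for the simple random walk on a finite graph with node attributes f : V → ℝ^d. Define f_{k,m} ∈ ℝ^n by f_{1,m} = (1/m!)(P ⊙ C^{u_{M-m+1}} ⊙ ⋯ ⊙ C^{u_M})·𝟙 and, for k ≥ 2, f_{k,m} = P·f_{k-1,m} + Σ_{r=1}^m (1/r!)(P ⊙ C^{u_{M-m+1}} ⊙ ⋯ ⊙ C^{u_{M-m+r}})·f_{k-1,m-r} with f_{k,0} = 𝟙. Then f_{k,m}(i) = ⟨ℓ_m, Φ̂_k(i)⟩ for all nodes i, all k ≥ 1, and all 1 ≤ m ≤ M, where ⟨ℓ_m, ·⟩ pairs with the degree-m tensor component. -/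
/-!
Conditioning on the first step of the walk gives the Markov decomposition
`Φ̂_{k+1}(i) = Σ_j P_{ij} exp_⊗(f j - f i) · Φ̂_k(j)`. Pairing the degree-`m` part of a Cauchy
product with a pure tensor `ℓ = a_c ⊗ ⋯ ⊗ a_{c+m-1}` factors through the splittings
`m = r + (m - r)`: the first `r` factors of `ℓ` meet the degree-`r` part of `exp_⊗(f j - f i)`, which contributes
`(1/r!) ∏ C`, and the remaining `m - r` factors form `ℓ_{m-r}`. So `⟨ℓ_m, Φ̂_k(·)⟩` obeys the
recursion defining `f_{k,m}`, started from `Φ̂_0 = 1`, and the two agree by induction on `k`.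
-/

/-- Coordinate model of the `m`-th tensor power `(ℝ^d)^{⊗m}`. -/
abbrev Tens (d m : ℕ) := (Fin m → Fin d) → ℝ

/-- The graded space `H = ∏_{m ≥ 0} (ℝ^d)^{⊗m}`. -/
abbrev GradedSeq (d : ℕ) := ∀ m : ℕ, Tens d m

/-- The graded (Cauchy) product on `H`: `(u·v)_m = Σ_{i=0}^m u_i ⊗ v_{m-i}`. -/
noncomputable def cauchyMul {d : ℕ} (u v : GradedSeq d) : GradedSeq d :=
  fun m f => ∑ i : Fin (m+1),
    u i.val (fun p => f ⟨p.val, lt_of_lt_of_le p.isLt (Nat.lt_succ_iff.mp i.isLt)⟩) *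
    v (m - i.val) (fun p => f ⟨i.val + p.val, by
      have h1 := p.isLt; have h2 := i.isLt; omega⟩)

/-- The unit `1_H = (1, 0, 0, …)` of the graded algebra. -/
def oneSeq (d : ℕ) : GradedSeq d := fun m _ => if m = 0 then 1 else 0

/-- Ordered product of a list of elements of `H`. -/
noncomputable def prodSeq {d : ℕ} (l : List (GradedSeq d)) : GradedSeq d :=
  l.foldr cauchyMul (oneSeq d)

/-- The tensor exponential `exp_⊗(x) = (x^{⊗m}/m!)_{m ≥ 0}` in coordinates. -/
noncomputable def texp {d : ℕ} (x : Fin d → ℝ) : GradedSeq d :=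
  fun m f => ((m.factorial : ℝ))⁻¹ * ∏ p : Fin m, x (f p)

/-- The inner product on `(ℝ^d)^{⊗m}` making the standard coordinate tensors an
orthonormal basis. -/
noncomputable def tinner {d : ℕ} (m : ℕ) (a b : Tens d m) : ℝ :=
  ∑ f : Fin m → Fin d, a f * b f

/-- `Φ̂_k(i) = E[exp_⊗(δ₁L)⋯exp_⊗(δ_kL) | B₀ = i] ∈ H`: the probability-weighted sum,
over all length-`k` trajectories of the random walk with transition matrix `P` started
at `i`, of the ordered graded product of the tensor exponentials of the attribute
increments. -/
noncomputable def PhiHat {n d : ℕ} (fattr : Fin n → Fin d → ℝ)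
    (P : Matrix (Fin n) (Fin n) ℝ) (k : ℕ) (i : Fin n) : GradedSeq d :=
  ∑ w : Fin (k+1) → Fin n,
    if w 0 = i then
      (∏ q : Fin k, P (w q.castSucc) (w q.succ)) •
        prodSeq (List.ofFn fun q : Fin k =>
          texp (fun b => fattr (w q.succ) b - fattr (w q.castSucc) b))
    else 0

noncomputable def pureTensor {d : ℕ} (a : ℕ → Fin d → ℝ) (c m : ℕ) : Tens d m :=
  fun f => ∏ p : Fin m, a (c + p) (f p)

lemma tinner_pureTensor_cauchyMul {d : ℕ} (a : ℕ → Fin d → ℝ) (c m : ℕ) (A B : GradedSeq d) :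
    tinner m (pureTensor a c m) (cauchyMul A B m) =
      ∑ r : Fin (m + 1), tinner r (pureTensor a c r) (A r) *
        tinner (m - r) (pureTensor a (c + r) (m - r)) (B (m - r)) := by
  conv_lhs => rw [tinner]; simp only [cauchyMul, Finset.mul_sum]
  rw [Finset.sum_comm]
  refine Finset.sum_congr rfl fun r _ => ?_
  have hm : r + (m - r : ℕ) = m := by omega
  let e : (Fin r → Fin d) × (Fin (m - r) → Fin d) ≃ (Fin m → Fin d) :=
    (Fin.appendEquiv _ _).trans (Equiv.arrowCongr (finCongr hm) (Equiv.refl _))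
  rw [tinner, tinner, Finset.sum_mul_sum, ← Fintype.sum_prod_type', ← e.sum_comp]
  refine Fintype.sum_congr _ _ fun gh => ?_
  have hsplit : pureTensor a c m (e gh) =
      pureTensor a c r gh.1 * pureTensor a (c + r) (m - r) gh.2 := by
    simp only [pureTensor, e]
    rw [← Fin.prod_congr' _ hm, Fin.prod_univ_add]
    simp [Fin.append_left, Fin.append_right, add_assoc]
  have hleft : (fun p : Fin r => e gh ⟨p, by omega⟩) = gh.1 := by
    funext p; exact Fin.append_left gh.1 gh.2 p
  have hright : (fun p : Fin (m - r) => e gh ⟨r + p, by omega⟩) = gh.2 := by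
    funext p; exact Fin.append_right gh.1 gh.2 p
  rw [hleft, hright, hsplit]
  ring

lemma tinner_pureTensor_texp {d : ℕ} (a : ℕ → Fin d → ℝ) (c r : ℕ) (x : Fin d → ℝ) :
    tinner r (pureTensor a c r) (texp x r) =
      (r.factorial : ℝ)⁻¹ * ∏ p ∈ Finset.range r, ∑ b, a (c + p) b * x b := by
  simp only [tinner, pureTensor, texp, mul_left_comm _ (r.factorial : ℝ)⁻¹,
    ← Finset.prod_mul_distrib, ← Finset.mul_sum]
  rw [← Fin.prod_univ_eq_prod_range, Finset.prod_univ_sum, Fintype.piFinset_univ]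

lemma tinner_pureTensor_oneSeq {d : ℕ} (a : ℕ → Fin d → ℝ) (c m : ℕ) :
    tinner m (pureTensor a c m) (oneSeq d m) = if m = 0 then 1 else 0 := by
  cases m <;> simp [tinner, oneSeq, pureTensor]

lemma tinner_sum_smul {d m : ℕ} {ι : Type*} (s : Finset ι) (a : Tens d m) (c : ι → ℝ)
    (v : ι → GradedSeq d) :
    tinner m a ((∑ x ∈ s, c x • v x) m) = ∑ x ∈ s, c x * tinner m a (v x m) := by
  simp only [tinner, Finset.sum_apply, Pi.smul_apply, smul_eq_mul, Finset.mul_sum]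
  rw [Finset.sum_comm]
  exact Finset.sum_congr rfl fun x _ => Finset.sum_congr rfl fun f _ => by ring

noncomputable def cauchyMulLeft {d : ℕ} (x : GradedSeq d) : GradedSeq d →ₗ[ℝ] GradedSeq d where
  toFun := cauchyMul x
  map_add' v w := by
    funext m f
    simp only [cauchyMul, Pi.add_apply, mul_add, Finset.sum_add_distrib]
  map_smul' c v := by
    funext m f
    simp only [cauchyMul, Pi.smul_apply, smul_eq_mul, RingHom.id_apply, Finset.mul_sum]
    exact Finset.sum_congr rfl fun r _ => by ring

lemma cauchyMulLeft_apply {d : ℕ} (x v : GradedSeq d) : cauchyMulLeft x v = cauchyMul x v := rfl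

section RandomWalk

variable {n d : ℕ} (fattr : Fin n → Fin d → ℝ) (P : Matrix (Fin n) (Fin n) ℝ)

lemma PhiHat_zero (i : Fin n) : PhiHat fattr P 0 i = oneSeq d := by
  rw [PhiHat, Fintype.sum_eq_single (fun _ => i)]
  · simp [prodSeq]
  · intro w hw
    rw [if_neg]
    exact fun h => hw (funext fun q => by rw [Fin.fin_one_eq_zero q, h])

lemma PhiHat_succ (k : ℕ) (i : Fin n) :
    PhiHat fattr P (k + 1) i =
      ∑ j, P i j • cauchyMul (texp (fun b => fattr j b - fattr i b)) (PhiHat fattr P k j) := by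
  have hright : ∀ j,
      P i j • cauchyMul (texp (fun b => fattr j b - fattr i b)) (PhiHat fattr P k j) =
      ∑ w : Fin (k + 1) → Fin n, if w 0 = j then
        P i (w 0) • cauchyMulLeft (texp (fun b => fattr (w 0) b - fattr i b))
          ((∏ q : Fin k, P (w q.castSucc) (w q.succ)) •
            prodSeq (List.ofFn fun q : Fin k =>
              texp (fun b => fattr (w q.succ) b - fattr (w q.castSucc) b))) else 0 := by
    intro j
    rw [PhiHat, ← cauchyMulLeft_apply, map_sum, Finset.smul_sum]
    refine Fintype.sum_congr _ _ fun w => ?_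
    split_ifs with h
    · rw [h]
    · rw [map_zero, smul_zero]
  -- a walk of length `k + 1` from `i` is `Fin.cons i w` for a walk `w` of length `k`
  rw [Fintype.sum_congr _ _ hright, Finset.sum_comm, PhiHat,
    ← (Fin.consEquiv fun _ => Fin n).sum_comp, Fintype.sum_prod_type, Fintype.sum_eq_single i]
  · refine Fintype.sum_congr _ _ fun w => ?_
    simp only [Fin.consEquiv_apply, Fin.cons_zero, if_true, Finset.sum_ite_eq, Finset.mem_univ,
      map_smul, smul_smul, Fin.prod_univ_succ, List.ofFn_succ, Fin.castSucc_zero,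
      ← Fin.succ_castSucc, Fin.cons_succ]
    rfl
  · intro a ha
    simp [ha]

lemma PhiHat_apply_zero (hP : ∀ i, ∑ j, P i j = 1) (k : ℕ) (i : Fin n) (f : Fin 0 → Fin d) :
    PhiHat fattr P k i 0 f = 1 := by
  induction k generalizing i with
  | zero => simp [PhiHat_zero, oneSeq]
  | succ k ih => simp [PhiHat_succ, cauchyMul, texp, ih, hP i]

lemma tinner_pureTensor_PhiHat_succ (u : ℕ → Fin d → ℝ) (C : ℕ → Matrix (Fin n) (Fin n) ℝ)
    (hC : ∀ a i j, P i j ≠ 0 → C a i j = ∑ b, u a b * (fattr j b - fattr i b))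
    (c k m : ℕ) (i : Fin n) :
    tinner m (pureTensor u c m) (PhiHat fattr P (k + 1) i m) =
      (∑ j, P i j * tinner m (pureTensor u c m) (PhiHat fattr P k j m)) +
        ∑ r ∈ Finset.Icc 1 m, (r.factorial : ℝ)⁻¹ *
          ∑ j, (P i j * ∏ p ∈ Finset.range r, C (c + p) i j) *
            tinner (m - r) (pureTensor u (c + r) (m - r)) (PhiHat fattr P k j (m - r)) := by
  have hPC : ∀ j r, P i j * ∏ p ∈ Finset.range r, C (c + p) i j =
      P i j * ∏ p ∈ Finset.range r, ∑ b, u (c + p) b * (fattr j b - fattr i b) := by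
    intro j r
    by_cases hP : P i j = 0
    · simp [hP]
    · simp only [hC _ i j hP]
  have hterm : ∀ j, tinner m (pureTensor u c m)
      (cauchyMul (texp fun b => fattr j b - fattr i b) (PhiHat fattr P k j) m) =
      tinner m (pureTensor u c m) (PhiHat fattr P k j m) +
        ∑ r ∈ Finset.Icc 1 m, (r.factorial : ℝ)⁻¹ *
          (∏ p ∈ Finset.range r, ∑ b, u (c + p) b * (fattr j b - fattr i b)) *
            tinner (m - r) (pureTensor u (c + r) (m - r)) (PhiHat fattr P k j (m - r)) := by
    intro j
    rw [tinner_pureTensor_cauchyMul, Fin.sum_univ_eq_sum_range (fun r => tinner r _ (texp _ r) *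
        tinner (m - r) (pureTensor u (c + r) (m - r)) (PhiHat fattr P k j (m - r))),
      Finset.range_eq_Ico, Finset.sum_eq_sum_Ico_succ_bot (Nat.succ_pos m), Nat.succ_eq_add_one,
      zero_add, Finset.Ico_add_one_right_eq_Icc]
    simp [tinner_pureTensor_texp]
  rw [PhiHat_succ, tinner_sum_smul]
  simp only [hterm, mul_add, Finset.sum_add_distrib, Finset.mul_sum]
  rw [Finset.sum_comm]
  refine congrArg _ (Finset.sum_congr rfl fun r _ => Finset.sum_congr rfl fun j _ => ?_)
  rw [hPC]
  ring

end RandomWalk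

lemma randomWalk_sum_row_eq_one {n : ℕ} (Adj : Fin n → Fin n → Prop) [DecidableRel Adj]
    (P : Matrix (Fin n) (Fin n) ℝ)
    (hP : ∀ i j, P i j = if Adj i j then ((degree n Adj i : ℝ))⁻¹ else 0)
    (i : Fin n) (hi : 0 < degree n Adj i) : ∑ j, P i j = 1 := by
  simp only [hP]
  rw [← Finset.sum_filter, Finset.sum_const, nsmul_eq_mul]
  exact mul_inv_cancel₀ (Nat.cast_ne_zero.mpr hi.ne')

section Recursion

variable {n : ℕ} (P : Matrix (Fin n) (Fin n) ℝ) (C : ℕ → Matrix (Fin n) (Fin n) ℝ) (M : ℕ)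

noncomputable def lowRankStep (F : ℕ → Fin n → ℝ) (m : ℕ) (i : Fin n) : ℝ :=
  (∑ j, P i j * F m j) +
    ∑ r ∈ Finset.Icc 1 m, (r.factorial : ℝ)⁻¹ *
      ∑ j, (P i j * ∏ p ∈ Finset.range r, C (M - m + 1 + p) i j) * F (m - r) j

lemma lowRankStep_congr {F F' : ℕ → Fin n → ℝ} (h : ∀ m ≤ M, ∀ j, F m j = F' m j)
    {m : ℕ} (hm : m ≤ M) (i : Fin n) :
    lowRankStep P C M F m i = lowRankStep P C M F' m i := by
  simp only [lowRankStep, h m hm]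
  refine congrArg _ (Finset.sum_congr rfl fun r _ => ?_)
  simp only [h (m - r) (by omega)]

lemma lowRankStep_initial {m : ℕ} (hm : 1 ≤ m) (i : Fin n) :
    lowRankStep P C M (fun m _ => if m = 0 then 1 else 0) m i =
      (m.factorial : ℝ)⁻¹ * ∑ j, P i j * ∏ p ∈ Finset.range m, C (M - m + 1 + p) i j := by
  rw [lowRankStep, Finset.sum_eq_single_of_mem m (Finset.mem_Icc.mpr ⟨hm, le_rfl⟩)]
  · simp [Nat.one_le_iff_ne_zero.mp hm]
  · intro r hr hrm
    have : m - r ≠ 0 := by simp only [Finset.mem_Icc] at hr; omega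
    simp [this]

lemma tinner_PhiHat_succ_eq_lowRankStep {d : ℕ} (fattr : Fin n → Fin d → ℝ) (u : ℕ → Fin d → ℝ)
    (hC : ∀ a i j, P i j ≠ 0 → C a i j = ∑ b, u a b * (fattr j b - fattr i b))
    (k : ℕ) {m : ℕ} (hm : m ≤ M) (i : Fin n) :
    tinner m (pureTensor u (M - m + 1) m) (PhiHat fattr P (k + 1) i m) =
      lowRankStep P C M
        (fun m j => tinner m (pureTensor u (M - m + 1) m) (PhiHat fattr P k j m)) m i := by
  rw [tinner_pureTensor_PhiHat_succ fattr P u C hC, lowRankStep]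
  refine congrArg _ (Finset.sum_congr rfl fun r hr => ?_)
  have : M - m + 1 + r = M - (m - r) + 1 := by simp only [Finset.mem_Icc] at hr; omega
  rw [this]

end Recursion

theorem low_rank_recursion_general (n d M : ℕ)
    (Adj : Fin n → Fin n → Prop) [DecidableRel Adj]
    (hdeg : ∀ i, 0 < degree n Adj i)
    (fattr : Fin n → Fin d → ℝ) (u : ℕ → Fin d → ℝ)
    (P : Matrix (Fin n) (Fin n) ℝ)
    (hP : ∀ i j, P i j = if Adj i j then ((degree n Adj i : ℝ))⁻¹ else 0)
    (C : ℕ → Matrix (Fin n) (Fin n) ℝ)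
    (hC : ∀ a i j, C a i j =
      if Adj i j then ∑ b, u a b * (fattr j b - fattr i b) else 0)
    (Fk : ℕ → ℕ → Fin n → ℝ)
    (hF0 : ∀ k i, Fk k 0 i = 1)
    (hF1 : ∀ m, 1 ≤ m → m ≤ M → ∀ i, Fk 1 m i =
      ((m.factorial : ℝ))⁻¹ *
        ∑ j, P i j * ∏ p ∈ Finset.range m, C (M - m + 1 + p) i j)
    (hFk : ∀ k, 2 ≤ k → ∀ m, 1 ≤ m → m ≤ M → ∀ i, Fk k m i =
      (∑ j, P i j * Fk (k-1) m j) +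
        ∑ r ∈ Finset.Icc 1 m, ((r.factorial : ℝ))⁻¹ *
          ∑ j, (P i j * ∏ p ∈ Finset.range r, C (M - m + 1 + p) i j) *
            Fk (k-1) (m - r) j) :
    ∀ k, 1 ≤ k → ∀ m, 1 ≤ m → m ≤ M → ∀ i,
      Fk k m i =
        tinner m (fun fidx => ∏ p : Fin m, u (M - m + 1 + p.val) (fidx p))
          (PhiHat fattr P k i m) := by
  have hstoch i : ∑ j, P i j = 1 := randomWalk_sum_row_eq_one Adj P hP i (hdeg i)
  have hCP a i j (hPij : P i j ≠ 0) : C a i j = ∑ b, u a b * (fattr j b - fattr i b) := by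
    rw [hC, if_pos]
    by_contra hAdj
    exact hPij (by rw [hP, if_neg hAdj])
  set G : ℕ → ℕ → Fin n → ℝ :=
    fun k m i => tinner m (pureTensor u (M - m + 1) m) (PhiHat fattr P k i m)
  have hG_deg_zero k i : G k 0 i = 1 := by
    simp [G, tinner, pureTensor, PhiHat_apply_zero fattr P hstoch]
  have hG_init : G 0 = fun m _ => if m = 0 then 1 else 0 := by
    funext m i
    simp [G, PhiHat_zero, tinner_pureTensor_oneSeq]
  have hG_succ k m i (hm : m ≤ M) : G (k + 1) m i = lowRankStep P C M (G k) m i :=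
    tinner_PhiHat_succ_eq_lowRankStep P C M fattr u hCP k hm i
  -- `m = 0` is included because the recursion reaches down to `m - r = 0`
  suffices h : ∀ k, 1 ≤ k → ∀ m ≤ M, ∀ i, Fk k m i = G k m i from
    fun k hk m _ hmM i => h k hk m hmM i
  intro k hk
  induction k, hk using Nat.le_induction with
  | base =>
    intro m hmM i
    rcases Nat.eq_zero_or_pos m with rfl | hm
    · rw [hF0, hG_deg_zero]
    · rw [hF1 m hm hmM i, hG_succ 0 m i hmM, hG_init, lowRankStep_initial P C M hm]
  | succ k hk ih =>
    intro m hmM i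
    rcases Nat.eq_zero_or_pos m with rfl | hm
    · rw [hF0, hG_deg_zero]
    · rw [hFk (k + 1) (by omega) m hm hmM i, Nat.add_sub_cancel, hG_succ k m i hmM]
      exact lowRankStep_congr P C M ih hmM i

/-- Low-rank recursion (Theorem 3 of the paper): with `ℓ_m = u_{M-m+1} ⊗ ⋯ ⊗ u_M`
(1-indexed `u`), `C^a_{i,j} = ⟨u_a, f j − f i⟩` for `i ~ j` (else 0), and `f_{k,m}`
defined by the stated recursion in terms of entrywise products of `P` with the `C`
matrices, one has `f_{k,m}(i) = ⟨ℓ_m, Φ̂_k(i)⟩` for all nodes `i`, walk lengths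
`k ≥ 1`, and degrees `1 ≤ m ≤ M`. -/
theorem low_rank_recursion (n d M : ℕ) (hM : 1 ≤ M)
    (Adj : Fin n → Fin n → Prop) [DecidableRel Adj] (hsymm : Symmetric Adj)
    (hdeg : ∀ i, 0 < degree n Adj i)
    (fattr : Fin n → Fin d → ℝ) (u : ℕ → Fin d → ℝ)
    (P : Matrix (Fin n) (Fin n) ℝ)
    (hP : ∀ i j, P i j = if Adj i j then ((degree n Adj i : ℝ))⁻¹ else 0)
    (C : ℕ → Matrix (Fin n) (Fin n) ℝ)
    (hC : ∀ a i j, C a i j =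
      if Adj i j then ∑ b, u a b * (fattr j b - fattr i b) else 0)
    (Fk : ℕ → ℕ → Fin n → ℝ)
    (hF0 : ∀ k i, Fk k 0 i = 1)
    (hF1 : ∀ m, 1 ≤ m → m ≤ M → ∀ i, Fk 1 m i =
      ((m.factorial : ℝ))⁻¹ *
        ∑ j, P i j * ∏ p ∈ Finset.range m, C (M - m + 1 + p) i j)
    (hFk : ∀ k, 2 ≤ k → ∀ m, 1 ≤ m → m ≤ M → ∀ i, Fk k m i =
      (∑ j, P i j * Fk (k-1) m j) +
        ∑ r ∈ Finset.Icc 1 m, ((r.factorial : ℝ))⁻¹ *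
          ∑ j, (P i j * ∏ p ∈ Finset.range r, C (M - m + 1 + p) i j) *
            Fk (k-1) (m - r) j) :
    ∀ k, 1 ≤ k → ∀ m, 1 ≤ m → m ≤ M → ∀ i,
      Fk k m i =
        tinner m (fun fidx => ∏ p : Fin m, u (M - m + 1 + p.val) (fidx p))
          (PhiHat fattr P k i m) :=
  low_rank_recursion_general n d M Adj hdeg fattr u P hP C hC Fk hF0 hF1 hFk
end

section
/- With notation as in the low-rank recursion, including the starting node attribute: letting Φ_k(i) = exp_⊗(f(i))·Φ̂_k(i) (product in the algebra H), ℓ_M = u_1 ⊗ ⋯ ⊗ u_M, and F^u_i = ⟨u, f(i)⟩, one has ⟨ℓ_M, Φ_k(i)⟩ = Σ_{r=0}^M (1/r!)·F^{u_1}_i ⋯ F^{u_r}_i · f_{k,M-r}(i), where f_{k,m}(i) = ⟨u_{M-m+1} ⊗ ⋯ ⊗ u_M, Φ̂_k(i)⟩ and the empty product for r = 0 is 1. -/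
/-!
Pair the product tensor `ℓ_M = u₁ ⊗ ⋯ ⊗ u_M` with the degree-`M` component
`Σ_r exp_⊗(x)_r ⊗ v_{M-r}` of the Cauchy product. Splitting `ℓ_M` after its first `r` factors,
each summand factorises as `⟨u₁ ⊗ ⋯ ⊗ u_r, x^{⊗r}/r!⟩ · ⟨u_{r+1} ⊗ ⋯ ⊗ u_M, v_{M-r}⟩`, and the
first factor is `(1/r!) ∏_{a ≤ r} ⟨u_a, x⟩`.
-/

open Finset

lemma Fintype.sum_fin_append {d r s : ℕ} (F : (Fin (r + s) → Fin d) → ℝ) :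
    ∑ f : Fin (r + s) → Fin d, F f =
      ∑ g : Fin r → Fin d, ∑ h : Fin s → Fin d, F (Fin.append g h) := by
  rw [← Fintype.sum_prod_type']
  exact (Fintype.sum_equiv (Fin.appendEquiv r s) _ F fun _ => rfl).symm

lemma tinner_pure_tensorMul {d M r s : ℕ} (hM : M = r + s) (ℓ : ℕ → Fin d → ℝ)
    (A : Tens d r) (B : Tens d s) :
    ∑ f : Fin M → Fin d, (∏ p : Fin M, ℓ p (f p)) *
      (A (fun p => f ⟨p.val, by omega⟩) * B (fun p => f ⟨r + p.val, by omega⟩)) =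
    tinner r (fun g => ∏ p : Fin r, ℓ p (g p)) A *
      tinner s (fun h => ∏ p : Fin s, ℓ (r + p) (h p)) B := by
  subst hM
  simp only [tinner, Fintype.sum_fin_append, Finset.sum_mul_sum]
  refine Finset.sum_congr rfl fun g _ => Finset.sum_congr rfl fun h _ => ?_
  have hleft : (fun p : Fin r => Fin.append g h ⟨p.val, by omega⟩) = g :=
    funext fun p => Fin.append_left g h p
  have hright : (fun p : Fin s => Fin.append g h ⟨r + p.val, by omega⟩) = h :=
    funext fun p => Fin.append_right g h p
  simp only [Fin.prod_univ_add, Fin.append_left, Fin.append_right, Fin.val_castAdd,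
    Fin.val_natAdd, hleft, hright]
  ring

lemma tinner_pure_texp {d : ℕ} (r : ℕ) (ℓ : ℕ → Fin d → ℝ) (x : Fin d → ℝ) :
    tinner r (fun g => ∏ p : Fin r, ℓ p (g p)) (texp x r) =
      (r.factorial : ℝ)⁻¹ * ∏ p ∈ range r, ∑ c, ℓ p c * x c := by
  simp only [tinner, texp, mul_left_comm _ (r.factorial : ℝ)⁻¹, ← Finset.mul_sum,
    ← Finset.prod_mul_distrib]
  rw [← Fintype.prod_sum (fun (p : Fin r) c => ℓ p c * x c),
    Fin.prod_univ_eq_prod_range (fun p => ∑ c, ℓ p c * x c)]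

lemma tinner_pure_texp_cauchyMul {d : ℕ} (M : ℕ) (ℓ : ℕ → Fin d → ℝ) (x : Fin d → ℝ)
    (v : GradedSeq d) :
    tinner M (fun f => ∏ p : Fin M, ℓ p (f p)) (cauchyMul (texp x) v M) =
      ∑ r ∈ range (M + 1), (r.factorial : ℝ)⁻¹ * (∏ p ∈ range r, ∑ c, ℓ p c * x c) *
        tinner (M - r) (fun f => ∏ p : Fin (M - r), ℓ (r + p) (f p)) (v (M - r)) := by
  simp only [tinner, cauchyMul, Finset.mul_sum]
  rw [Finset.sum_comm, ← Fin.sum_univ_eq_sum_range]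
  refine Finset.sum_congr rfl fun r _ => ?_
  rw [tinner_pure_tensorMul (by omega), tinner_pure_texp, tinner, Finset.mul_sum]

theorem low_rank_zero_start_general (n d M k : ℕ)
    (fattr : Fin n → Fin d → ℝ) (u : ℕ → Fin d → ℝ)
    (P : Matrix (Fin n) (Fin n) ℝ)
    (i : Fin n) :
    tinner M (fun fidx => ∏ p : Fin M, u (1 + p.val) (fidx p))
        ((cauchyMul (texp (fattr i)) (PhiHat fattr P k i)) M) =
      ∑ r ∈ Finset.range (M+1), ((r.factorial : ℝ))⁻¹ *
        (∏ p ∈ Finset.range r, ∑ b, u (p + 1) b * fattr i b) *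
        tinner (M - r)
          (fun fidx => ∏ p : Fin (M - r), u (M - (M - r) + 1 + p.val) (fidx p))
          (PhiHat fattr P k i (M - r)) := by
  rw [tinner_pure_texp_cauchyMul M (fun p => u (1 + p))]
  refine Finset.sum_congr rfl fun r hr => ?_
  have hrM : M - (M - r) = r := Nat.sub_sub_self (Nat.lt_succ_iff.mp (Finset.mem_range.mp hr))
  simp only [hrM, add_comm 1, add_right_comm r 1]

/-- Adding the starting node attribute: with `Φ_k(i) = exp_⊗(f i)·Φ̂_k(i)`,
`ℓ_M = u₁ ⊗ ⋯ ⊗ u_M` (1-indexed `u`) and `F^{u_a}_i = ⟨u_a, f i⟩`, one has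
`⟨ℓ_M, Φ_k(i)⟩ = Σ_{r=0}^M (1/r!)·F^{u₁}_i ⋯ F^{u_r}_i · f_{k,M-r}(i)`,
where `f_{k,m}(i) = ⟨u_{M-m+1} ⊗ ⋯ ⊗ u_M, Φ̂_k(i)⟩` and the empty product is 1. -/
theorem low_rank_zero_start (n d M k : ℕ) (hM : 1 ≤ M) (hk : 1 ≤ k)
    (Adj : Fin n → Fin n → Prop) [DecidableRel Adj] (hsymm : Symmetric Adj)
    (hdeg : ∀ i, 0 < degree n Adj i)
    (fattr : Fin n → Fin d → ℝ) (u : ℕ → Fin d → ℝ)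
    (P : Matrix (Fin n) (Fin n) ℝ)
    (hP : ∀ i j, P i j = if Adj i j then ((degree n Adj i : ℝ))⁻¹ else 0)
    (i : Fin n) :
    tinner M (fun fidx => ∏ p : Fin M, u (1 + p.val) (fidx p))
        ((cauchyMul (texp (fattr i)) (PhiHat fattr P k i)) M) =
      ∑ r ∈ Finset.range (M+1), ((r.factorial : ℝ))⁻¹ *
        (∏ p ∈ Finset.range r, ∑ b, u (p + 1) b * fattr i b) *
        tinner (M - r)
          (fun fidx => ∏ p : Fin (M - r), u (M - (M - r) + 1 + p.val) (fidx p))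
          (PhiHat fattr P k i (M - r)) :=
  low_rank_zero_start_general n d M k fattr u P i
end
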